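/- arXiv:2604.00306 — 6 statements merged into one kernel-verified Lean document; each statement's English description precedes it below -/
import Mathlib

section
/- Let H be a finite-dimensional Hilbert space, P = P* self-adjoint, and 𝒜 a finite family of operators on H closed under taking adjoints. Suppose γ : ℝ → [0,∞) satisfies the KMS balance condition γ(−ω) = e^{ω} γ(ω) for all ω. Define the Davies dissipator 𝒟(T) = Σ_{A∈𝒜} Σ_{ν∈ℬ(P)} γ(ν) ( A_ν T A_ν* − ½(A_ν* A_ν T + T A_ν* A_ν) ), where ℬ(P) is the Bohr spectrum and A_ν = Σ_{E₂-E₁=ν} 1_{E₂}(P) A 1_{E₁}(P). Then 𝒟(e^{−P}) = 0. -/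
open scoped BigOperators

noncomputable def bohrComponent {H : Type*} [NormedAddCommGroup H] [InnerProductSpace ℂ H]
    (S : Finset ℝ) (π : ℝ → H →L[ℂ] H) (A : H →L[ℂ] H) (ν : ℝ) : H →L[ℂ] H :=
  ∑ E₂ ∈ S, ∑ E₁ ∈ S, if E₂ - E₁ = ν then π E₂ * A * π E₁ else 0

/-!
Write `G = e^{-P}` and `K = A_ν`. Since `P` acts as `E₂` on the left and as `E₁` on the right of
`1_{E₂}(P) A 1_{E₁}(P)`, we get `P K = K (P + ν)`, hence `G K = e^{-ν} K G`; moreover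
`K* = (A*)_{-ν}`. Consequently `G` commutes with `K* K`, and the `ν`-term of the dissipator equals
`γ(ν) e^{ν} K K* G - γ(ν) K* K G = γ(-ν) K K* G - γ(ν) K* K G` by the KMS condition. This is
`F(A*, -ν) - F(A, ν)` for the flux `F(A, ν) = γ(ν) A_ν* A_ν G`, and the involution
`(A, ν) ↦ (A*, -ν)` of `𝒜 × ℬ(P)` makes the sum telescope to zero.
-/

open NormedSpace

theorem Finset.sum_sub_comp_involutive {α M : Type*} [AddCommGroup M] {s : Finset α}
    {σ : α → α} (hσ : Function.Involutive σ) (hs : ∀ x ∈ s, σ x ∈ s) (f : α → M) :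
    ∑ x ∈ s, (f (σ x) - f x) = 0 := by
  rw [Finset.sum_sub_distrib, sub_eq_zero]
  exact Finset.sum_nbij' σ σ hs hs (fun x _ => hσ x) (fun x _ => hσ x) fun _ _ => rfl

theorem neg_mem_image_sub_of_mem {S : Finset ℝ} {ν : ℝ}
    (hν : ν ∈ (S ×ˢ S).image (fun p => p.1 - p.2)) :
    -ν ∈ (S ×ˢ S).image (fun p => p.1 - p.2) := by
  obtain ⟨⟨E₂, E₁⟩, hE, rfl⟩ := Finset.mem_image.mp hν
  exact Finset.mem_image.mpr ⟨(E₁, E₂), Finset.mem_product.mpr (Finset.mem_product.mp hE).symm,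
    (neg_sub E₂ E₁).symm⟩

theorem NormedSpace.exp_mul_eq_smul_mul_exp {𝕜 A : Type*} [RCLike 𝕜] [NormedRing A]
    [NormedAlgebra 𝕜 A] [CompleteSpace A] {x k : A} {c : 𝕜}
    (h : x * k = k * (x + algebraMap 𝕜 A c)) :
    exp x * k = exp c • (k * exp x) := by
  let +nondep : NormedAlgebra ℚ A := .restrictScalars ℚ 𝕜 A
  have hsplit : exp (x + algebraMap 𝕜 A c) = exp x * algebraMap 𝕜 A (exp c) := by
    rw [algebraMap_exp_comm, exp_add_of_commute (Algebra.commutes c x).symm]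
  have hsemi : SemiconjBy k (x + algebraMap 𝕜 A c) x := h.symm
  rw [← hsemi.exp_right.eq, hsplit, ← mul_assoc, ← Algebra.commutes, Algebra.smul_def]

section Projections

variable {ι 𝕜 R : Type*} [DecidableEq ι] [CommSemiring 𝕜] [Semiring R] [Algebra 𝕜 R]
  {S : Finset ι} {p : ι → R} {c : ι → 𝕜} {P : R}

theorem mul_proj_of_eq_sum_smul (hP : P = ∑ j ∈ S, c j • p j)
    (hproj : ∀ i ∈ S, ∀ j ∈ S, p i * p j = if i = j then p i else 0) {i : ι} (hi : i ∈ S) :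
    P * p i = c i • p i := by
  rw [hP, Finset.sum_mul, Finset.sum_eq_single_of_mem i hi, smul_mul_assoc, hproj i hi i hi,
    if_pos rfl]
  intro j hj hji
  rw [smul_mul_assoc, hproj j hj i hi, if_neg hji, smul_zero]

theorem proj_mul_of_eq_sum_smul (hP : P = ∑ j ∈ S, c j • p j)
    (hproj : ∀ i ∈ S, ∀ j ∈ S, p i * p j = if i = j then p i else 0) {i : ι} (hi : i ∈ S) :
    p i * P = c i • p i := by
  rw [hP, Finset.mul_sum, Finset.sum_eq_single_of_mem i hi, mul_smul_comm, hproj i hi i hi,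
    if_pos rfl]
  intro j hj hji
  rw [mul_smul_comm, hproj i hi j hj, if_neg (Ne.symm hji), smul_zero]

end Projections

theorem lindblad_eq_of_mul_eq_smul_mul {𝕜 R : Type*} [Field 𝕜] [CharZero 𝕜] [Ring R] [Algebra 𝕜 R]
    {G K K' : R} {a b : 𝕜} (hK : G * K = a • (K * G)) (hK' : G * K' = b • (K' * G))
    (hab : b * a = 1) :
    K * G * K' - (1/2 : 𝕜) • (K' * K * G + G * (K' * K)) = b • (K * K' * G) - K' * K * G := by
  have hcomm : G * (K' * K) = K' * K * G := by
    rw [← mul_assoc, hK', smul_mul_assoc, mul_assoc, hK, mul_smul_comm, smul_smul, hab, one_smul,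
      mul_assoc]
  rw [mul_assoc K, hK', mul_smul_comm, ← mul_assoc, hcomm, ← two_smul 𝕜, smul_smul]
  norm_num

section Bohr

variable {H : Type*} [NormedAddCommGroup H] [InnerProductSpace ℂ H]
  {S : Finset ℝ} {π : ℝ → H →L[ℂ] H} {P : H →L[ℂ] H}

theorem mul_bohrComponent (hP : P = ∑ E ∈ S, (E : ℂ) • π E)
    (hproj : ∀ E ∈ S, ∀ E' ∈ S, π E * π E' = if E = E' then π E else 0)
    (A : H →L[ℂ] H) (ν : ℝ) :
    P * bohrComponent S π A ν = bohrComponent S π A ν * (P + algebraMap ℂ _ ν) := by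
  simp only [bohrComponent, Finset.mul_sum, Finset.sum_mul]
  refine Finset.sum_congr rfl fun E₂ hE₂ => Finset.sum_congr rfl fun E₁ hE₁ => ?_
  split_ifs with hν
  · have hleft : P * (π E₂ * A * π E₁) = (E₂ : ℂ) • (π E₂ * A * π E₁) := by
      simp only [← mul_assoc, mul_proj_of_eq_sum_smul hP hproj hE₂, smul_mul_assoc]
    have hright : π E₂ * A * π E₁ * P = (E₁ : ℂ) • (π E₂ * A * π E₁) := by
      rw [mul_assoc _ (π E₁), proj_mul_of_eq_sum_smul hP hproj hE₁, mul_smul_comm]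
    rw [hleft, mul_add, hright, ← Algebra.commutes, ← Algebra.smul_def, ← add_smul, ← hν]
    push_cast
    ring_nf
  · rw [mul_zero, zero_mul]

theorem exp_neg_mul_bohrComponent [CompleteSpace H] (hP : P = ∑ E ∈ S, (E : ℂ) • π E)
    (hproj : ∀ E ∈ S, ∀ E' ∈ S, π E * π E' = if E = E' then π E else 0) (A : H →L[ℂ] H) (ν : ℝ) :
    NormedSpace.exp (-P) * bohrComponent S π A ν
      = (Real.exp (-ν) : ℂ) • (bohrComponent S π A ν * NormedSpace.exp (-P)) := by
  have hneg : -P * bohrComponent S π A ν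
      = bohrComponent S π A ν * (-P + algebraMap ℂ _ (-(ν : ℂ))) := by
    rw [neg_mul, mul_bohrComponent hP hproj, map_neg, ← neg_add, mul_neg]
  rw [exp_mul_eq_smul_mul_exp hneg, ← Complex.exp_eq_exp_ℂ, Complex.ofReal_exp,
    Complex.ofReal_neg]

theorem adjoint_bohrComponent [CompleteSpace H] (hprojsa : ∀ E ∈ S, IsSelfAdjoint (π E))
    (A : H →L[ℂ] H) (ν : ℝ) :
    ContinuousLinearMap.adjoint (bohrComponent S π A ν)
      = bohrComponent S π (ContinuousLinearMap.adjoint A) (-ν) := by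
  simp only [← ContinuousLinearMap.star_eq_adjoint, bohrComponent, star_sum]
  rw [Finset.sum_comm]
  refine Finset.sum_congr rfl fun E₁ hE₁ => Finset.sum_congr rfl fun E₂ hE₂ => ?_
  have hswap : E₂ - E₁ = ν ↔ E₁ - E₂ = -ν := by constructor <;> intro h <;> linarith
  simp only [hswap]
  split_ifs
  · rw [star_mul, star_mul, (hprojsa _ hE₁).star_eq, (hprojsa _ hE₂).star_eq, mul_assoc]
  · exact star_zero _

theorem smul_lindblad_bohrComponent_exp_neg [CompleteSpace H]
    (hP : P = ∑ E ∈ S, (E : ℂ) • π E)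
    (hproj : ∀ E ∈ S, ∀ E' ∈ S, π E * π E' = if E = E' then π E else 0)
    (hprojsa : ∀ E ∈ S, IsSelfAdjoint (π E)) {γ : ℝ → ℝ}
    (hbal : ∀ ω, γ (-ω) = Real.exp ω * γ ω) (A : H →L[ℂ] H) (ν : ℝ) :
    (γ ν : ℂ) •
        (bohrComponent S π A ν * NormedSpace.exp (-P)
            * ContinuousLinearMap.adjoint (bohrComponent S π A ν)
          - (1/2 : ℂ) •
            (ContinuousLinearMap.adjoint (bohrComponent S π A ν) * bohrComponent S π A ν
                * NormedSpace.exp (-P)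
              + NormedSpace.exp (-P)
                * (ContinuousLinearMap.adjoint (bohrComponent S π A ν)
                    * bohrComponent S π A ν)))
      = (γ (-ν) : ℂ) •
          (ContinuousLinearMap.adjoint (bohrComponent S π (ContinuousLinearMap.adjoint A) (-ν))
            * bohrComponent S π (ContinuousLinearMap.adjoint A) (-ν) * NormedSpace.exp (-P))
        - (γ ν : ℂ) •
          (ContinuousLinearMap.adjoint (bohrComponent S π A ν) * bohrComponent S π A ν
            * NormedSpace.exp (-P)) := by
  have hadj := adjoint_bohrComponent (A := A) (ν := ν) hprojsa
  have hadj' : ContinuousLinearMap.adjoint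
      (bohrComponent S π (ContinuousLinearMap.adjoint A) (-ν)) = bohrComponent S π A ν := by
    rw [← hadj, ContinuousLinearMap.adjoint_adjoint]
  have hexp : NormedSpace.exp (-P) * bohrComponent S π (ContinuousLinearMap.adjoint A) (-ν)
      = (Real.exp ν : ℂ) • (bohrComponent S π (ContinuousLinearMap.adjoint A) (-ν)
          * NormedSpace.exp (-P)) := by
    simpa using exp_neg_mul_bohrComponent hP hproj (ContinuousLinearMap.adjoint A) (-ν)
  have hcoeff : (Real.exp ν : ℂ) * (Real.exp (-ν) : ℂ) = 1 := by
    rw [← Complex.ofReal_mul, ← Real.exp_add, add_neg_cancel, Real.exp_zero, Complex.ofReal_one]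
  rw [hadj', hadj, lindblad_eq_of_mul_eq_smul_mul (exp_neg_mul_bohrComponent hP hproj A ν) hexp
    hcoeff, smul_sub, smul_smul, hbal]
  push_cast
  ring_nf

end Bohr

theorem davies_dissipator_gibbs_general {H : Type*} [NormedAddCommGroup H] [InnerProductSpace ℂ H]
    [CompleteSpace H]
    (S : Finset ℝ) (π : ℝ → H →L[ℂ] H) (P : H →L[ℂ] H)
    (𝒜 : Finset (H →L[ℂ] H))
    (hP : P = ∑ E ∈ S, (E : ℂ) • π E)
    (hproj : ∀ E ∈ S, ∀ E' ∈ S, π E * π E' = if E = E' then π E else 0)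
    (hprojsa : ∀ E ∈ S, IsSelfAdjoint (π E))
    (h𝒜 : ∀ A ∈ 𝒜, ContinuousLinearMap.adjoint A ∈ 𝒜)
    (γ : ℝ → ℝ)
    (hbal : ∀ ω, γ (-ω) = Real.exp ω * γ ω) :
    ∑ A ∈ 𝒜, ∑ ν ∈ (S ×ˢ S).image (fun p => p.1 - p.2),
      (γ ν : ℂ) •
        (bohrComponent S π A ν * NormedSpace.exp (-P)
            * ContinuousLinearMap.adjoint (bohrComponent S π A ν)
          - (1/2 : ℂ) •
            (ContinuousLinearMap.adjoint (bohrComponent S π A ν) * bohrComponent S π A ν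
                * NormedSpace.exp (-P)
              + NormedSpace.exp (-P)
                * (ContinuousLinearMap.adjoint (bohrComponent S π A ν)
                    * bohrComponent S π A ν))) = 0 := by
  let σ : (H →L[ℂ] H) × ℝ → (H →L[ℂ] H) × ℝ := fun p => (ContinuousLinearMap.adjoint p.1, -p.2)
  have hσ : Function.Involutive σ := fun p => by simp [σ, ContinuousLinearMap.adjoint_adjoint]
  have hσ_mem : ∀ p ∈ 𝒜 ×ˢ (S ×ˢ S).image (fun p => p.1 - p.2),
      σ p ∈ 𝒜 ×ˢ (S ×ˢ S).image (fun p => p.1 - p.2) := fun p hp =>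
    Finset.mem_product.mpr ⟨h𝒜 _ (Finset.mem_product.mp hp).1,
      neg_mem_image_sub_of_mem (Finset.mem_product.mp hp).2⟩
  rw [← Finset.sum_product', Finset.sum_congr rfl fun p _ =>
    smul_lindblad_bohrComponent_exp_neg hP hproj hprojsa hbal p.1 p.2]
  exact Finset.sum_sub_comp_involutive hσ hσ_mem fun p => (γ p.2 : ℂ) •
    (ContinuousLinearMap.adjoint (bohrComponent S π p.1 p.2) * bohrComponent S π p.1 p.2
      * NormedSpace.exp (-P))

/-- The Davies dissipator annihilates the Gibbs state: for `P` self-adjoint on a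
finite-dimensional Hilbert space, a finite family `𝒜` of operators closed under adjoints, and
`γ ≥ 0` satisfying the KMS balance condition `γ(−ω) = e^{ω} γ(ω)`,
`𝒟(T) = Σ_{A∈𝒜} Σ_{ν∈ℬ(P)} γ(ν)(A_ν T A_ν* − ½{A_ν* A_ν, T})` satisfies `𝒟(e^{−P}) = 0`. -/
theorem davies_dissipator_gibbs {H : Type*} [NormedAddCommGroup H] [InnerProductSpace ℂ H]
    [FiniteDimensional ℂ H] [CompleteSpace H]
    (S : Finset ℝ) (π : ℝ → H →L[ℂ] H) (P : H →L[ℂ] H)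
    (𝒜 : Finset (H →L[ℂ] H))
    (hPsa : IsSelfAdjoint P)
    (hP : P = ∑ E ∈ S, (E : ℂ) • π E)
    (hproj : ∀ E ∈ S, ∀ E' ∈ S, π E * π E' = if E = E' then π E else 0)
    (hprojsa : ∀ E ∈ S, IsSelfAdjoint (π E))
    (hsum : ∑ E ∈ S, π E = 1)
    (h𝒜 : ∀ A ∈ 𝒜, ContinuousLinearMap.adjoint A ∈ 𝒜)
    (γ : ℝ → ℝ) (hγpos : ∀ ω, 0 ≤ γ ω)
    (hbal : ∀ ω, γ (-ω) = Real.exp ω * γ ω) :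
    ∑ A ∈ 𝒜, ∑ ν ∈ (S ×ˢ S).image (fun p => p.1 - p.2),
      (γ ν : ℂ) •
        (bohrComponent S π A ν * NormedSpace.exp (-P)
            * ContinuousLinearMap.adjoint (bohrComponent S π A ν)
          - (1/2 : ℂ) •
            (ContinuousLinearMap.adjoint (bohrComponent S π A ν) * bohrComponent S π A ν
                * NormedSpace.exp (-P)
              + NormedSpace.exp (-P)
                * (ContinuousLinearMap.adjoint (bohrComponent S π A ν)
                    * bohrComponent S π A ν))) = 0 :=
  davies_dissipator_gibbs_general S π P 𝒜 hP hproj hprojsa h𝒜 γ hbal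
end

section
/- Let b₁(t) = (1/8)π^{1/2} ∫_0^∞ (e^{−σ²(t+s)²} − e^{−σ²(t−s)²})/sinh(2πs) ds for σ > 0. Then ‖b₁‖_{L¹(ℝ)} ≤ (1/2)π^{1/2} ∫_0^∞ s/sinh(2πs) ds, and in particular ‖b₁‖_{L¹(ℝ)} ≤ (1/32)π^{1/2}, uniformly in σ. -/
/-!
Minkowski's integral inequality moves the `L¹` norm in `t` inside the `s`-integral. For fixed
`s > 0` the Gaussian `g u = exp (-σ² u²)` is even and decreasing in `|u|`, so
`∫ |g (t + s) - g (t - s)| dt = 2 ∫_{-s}^{s} g ≤ 4 s`, which gives the first bound. The constant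
comes from expanding `1 / sinh x = 2 ∑ₖ exp (-(2k+1) x)` and integrating termwise:
`∫_0^∞ s / sinh (a s) ds = (2 / a²) ∑ₖ 1 / (2k+1)² = π² / (4 a²)`, which is `1/16` for `a = 2π`.
-/

open MeasureTheory Real Set

namespace Real

theorem hasSum_inv_sinh {x : ℝ} (hx : 0 < x) :
    HasSum (fun k : ℕ => 2 * exp (-((2 * k + 1) * x))) (sinh x)⁻¹ := by
  have hq : exp (-(2 * x)) < 1 := exp_lt_one_iff.mpr (by linarith)
  have hterm (k : ℕ) : 2 * exp (-x) * exp (-(2 * x)) ^ k = 2 * exp (-((2 * k + 1) * x)) := by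
    rw [← exp_nat_mul, mul_assoc, ← exp_add]
    ring_nf
  have hsum : 2 * exp (-x) * (1 - exp (-(2 * x)))⁻¹ = (sinh x)⁻¹ := by
    have hden : 1 - exp (-(2 * x)) ≠ 0 := (sub_pos.mpr hq).ne'
    rw [sinh_eq, show -(2 * x) = -x + -x by ring, exp_add, exp_neg]
    have := exp_pos x
    field_simp
  simpa only [hterm, hsum] using
    (hasSum_geometric_of_lt_one (exp_nonneg _) hq).mul_left (2 * exp (-x))

theorem hasSum_one_div_odd_sq : HasSum (fun k : ℕ => 1 / (2 * k + 1 : ℝ) ^ 2) (π ^ 2 / 8) := by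
  have heven : HasSum (fun k : ℕ => 1 / ((2 * k : ℕ) : ℝ) ^ 2) (π ^ 2 / 24) := by
    have h := hasSum_zeta_two.mul_left (1 / 4)
    have hterm (k : ℕ) : 1 / 4 * (1 / (k : ℝ) ^ 2) = 1 / ((2 * k : ℕ) : ℝ) ^ 2 := by
      push_cast; ring
    rwa [show (1 / 4 : ℝ) * (π ^ 2 / 6) = π ^ 2 / 24 by ring, funext hterm] at h
  have hodd : Summable (fun k : ℕ => 1 / ((2 * k + 1 : ℕ) : ℝ) ^ 2) :=
    hasSum_zeta_two.summable.comp_injective (i := fun k : ℕ => 2 * k + 1)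
      (fun a b h => by simp only at h; omega)
  have htot := (HasSum.even_add_odd (f := fun n : ℕ => 1 / (n : ℝ) ^ 2) heven
    hodd.hasSum).unique hasSum_zeta_two
  have h := hodd.hasSum
  rw [show ∑' k : ℕ, 1 / ((2 * k + 1 : ℕ) : ℝ) ^ 2 = π ^ 2 / 8 by linarith] at h
  simpa only [Nat.cast_add, Nat.cast_mul, Nat.cast_ofNat, Nat.cast_one] using h

theorem lintegral_ofReal_mul_exp_neg_mul_Ioi {c : ℝ} (hc : 0 < c) :
    ∫⁻ s in Ioi 0, ENNReal.ofReal (s * exp (-(c * s))) = ENNReal.ofReal (1 / c ^ 2) := by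
  have key := integral_rpow_mul_exp_neg_mul_Ioi two_pos hc
  simp only [Gamma_two, mul_one, show (2 : ℝ) - 1 = 1 by norm_num, rpow_one, rpow_two] at key
  rw [← ofReal_integral_eq_lintegral_ofReal, key]
  · rw [one_div_pow]
  · exact .of_integral_ne_zero (by rw [key]; positivity)
  · filter_upwards [ae_restrict_mem measurableSet_Ioi] with s (hs : 0 < s)
    exact mul_nonneg hs.le (exp_nonneg _)

theorem lintegral_ofReal_div_sinh_mul_Ioi {a : ℝ} (ha : 0 < a) :
    ∫⁻ s in Ioi 0, ENNReal.ofReal (s / sinh (a * s)) = ENNReal.ofReal (π ^ 2 / (4 * a ^ 2)) := by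
  have hexpand : ∀ s ∈ Ioi (0 : ℝ), ENNReal.ofReal (s / sinh (a * s)) =
      ∑' k : ℕ, ENNReal.ofReal (2 * (s * exp (-((2 * k + 1) * a * s)))) := by
    intro s (hs : 0 < s)
    have h := (hasSum_inv_sinh (mul_pos ha hs)).mul_left s
    simp only [← div_eq_mul_inv, mul_left_comm s 2, ← mul_assoc _ a s] at h
    rw [← h.tsum_eq, ENNReal.ofReal_tsum_of_nonneg (fun k => by positivity) h.summable]
  have hterm (k : ℕ) : ∫⁻ s in Ioi 0, ENNReal.ofReal (2 * (s * exp (-((2 * k + 1) * a * s)))) =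
      ENNReal.ofReal (2 / a ^ 2 * (1 / (2 * k + 1) ^ 2)) := by
    simp only [ENNReal.ofReal_mul zero_le_two]
    rw [lintegral_const_mul _ (by fun_prop), lintegral_ofReal_mul_exp_neg_mul_Ioi (by positivity),
      ← ENNReal.ofReal_mul zero_le_two]
    congr 1
    field_simp
  have hsum := hasSum_one_div_odd_sq.mul_left (2 / a ^ 2)
  rw [setLIntegral_congr_fun measurableSet_Ioi hexpand, lintegral_tsum (fun k => by fun_prop),
    tsum_congr hterm, ← ENNReal.ofReal_tsum_of_nonneg (fun k => by positivity) hsum.summable,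
    hsum.tsum_eq]
  congr 1
  field_simp
  ring

theorem integral_div_sinh_mul_Ioi {a : ℝ} (ha : 0 < a) :
    ∫ s in Ioi 0, s / sinh (a * s) = π ^ 2 / (4 * a ^ 2) := by
  rw [integral_eq_lintegral_of_nonneg_ae, lintegral_ofReal_div_sinh_mul_Ioi ha,
    ENNReal.toReal_ofReal (by positivity)]
  · filter_upwards [ae_restrict_mem measurableSet_Ioi] with s (hs : 0 < s)
    exact div_nonneg hs.le (sinh_pos_iff.mpr (mul_pos ha hs)).le
  · exact Measurable.aestronglyMeasurable (by fun_prop)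

end Real

theorem integral_Ioi_comp_add_right {E : Type*} [NormedAddCommGroup E] [NormedSpace ℝ E]
    (f : ℝ → E) (a c : ℝ) : ∫ t in Ioi a, f (t + c) = ∫ t in Ioi (a + c), f t := by
  rw [← (measurePreserving_add_right volume c).setIntegral_preimage_emb
    (measurableEmbedding_addRight c) f (Ioi (a + c)), preimage_add_const_Ioi, add_sub_cancel_right]

theorem integral_abs_comp_add_sub_comp_sub_le {g : ℝ → ℝ} (hg : Integrable g)
    (hg_anti : ∀ x y, |x| ≤ |y| → g y ≤ g x) {s : ℝ} (hs : 0 ≤ s) :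
    ∫ t, |g (t + s) - g (t - s)| ≤ 4 * s * g 0 := by
  have hg_even (x : ℝ) : g (-x) = g x :=
    le_antisymm (hg_anti _ _ (abs_neg x).ge) (hg_anti _ _ (abs_neg x).le)
  have h_comp_abs (t : ℝ) : |g (|t| + s) - g (|t| - s)| = |g (t + s) - g (t - s)| := by
    rcases le_or_gt 0 t with ht | ht
    · rw [abs_of_nonneg ht]
    · rw [abs_of_neg ht, abs_sub_comm, ← hg_even (-t + s), ← hg_even (-t - s)]
      ring_nf
  have h_pos : ∀ t ∈ Ioi (0 : ℝ), |g (t + s) - g (t - s)| = g (t + -s) - g (t + s) := by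
    intro t (ht : 0 < t)
    have : |t - s| ≤ |t + s| := by
      rw [abs_of_nonneg (by linarith : 0 ≤ t + s)]
      exact abs_le.mpr ⟨by linarith, by linarith⟩
    rw [abs_sub_comm, abs_of_nonneg (sub_nonneg.mpr (hg_anti _ _ this)), ← sub_eq_add_neg]
  calc ∫ t, |g (t + s) - g (t - s)| = ∫ t, |g (|t| + s) - g (|t| - s)| := by
        simp only [h_comp_abs]
    _ = 2 * ∫ t in Ioi 0, (g (t + -s) - g (t + s)) := by
        rw [integral_comp_abs (f := fun t => |g (t + s) - g (t - s)|),
          setIntegral_congr_fun measurableSet_Ioi h_pos]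
    _ = 2 * ∫ t in (-s)..s, g t := by
        rw [integral_sub (hg.comp_add_right _).integrableOn (hg.comp_add_right _).integrableOn,
          integral_Ioi_comp_add_right, integral_Ioi_comp_add_right, zero_add, zero_add,
          intervalIntegral.integral_Ioi_sub_Ioi hg.integrableOn (by linarith)]
    _ ≤ 2 * ∫ t in (-s)..s, g 0 := by
        gcongr
        exact intervalIntegral.integral_mono_on (by linarith) hg.intervalIntegrable
          intervalIntegrable_const fun x hx => hg_anti 0 x (by simp)
    _ = 4 * s * g 0 := by
        rw [intervalIntegral.integral_const, smul_eq_mul]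
        ring

theorem integral_abs_exp_neg_mul_sq_add_sub_le {b s : ℝ} (hb : 0 < b) (hs : 0 ≤ s) :
    ∫ t, |exp (-b * (t + s) ^ 2) - exp (-b * (t - s) ^ 2)| ≤ 4 * s := by
  simpa using integral_abs_comp_add_sub_comp_sub_le (integrable_exp_neg_mul_sq hb)
    (fun x y h => exp_le_exp.mpr (by nlinarith [sq_le_sq.mpr h])) hs

theorem lintegral_enorm_exp_neg_mul_sq_add_sub_div_le {b s d : ℝ} (hb : 0 < b) (hs : 0 ≤ s)
    (hd : 0 < d) :
    ∫⁻ t, ‖(exp (-b * (t + s) ^ 2) - exp (-b * (t - s) ^ 2)) / d‖ₑ ≤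
      ENNReal.ofReal (4 * s / d) := by
  have hg := integrable_exp_neg_mul_sq hb
  have hint : Integrable fun t => (exp (-b * (t + s) ^ 2) - exp (-b * (t - s) ^ 2)) / d :=
    (hg.comp_add_right s |>.sub (hg.comp_sub_right s)).div_const d
  rw [← ofReal_integral_norm_eq_lintegral_enorm hint]
  refine ENNReal.ofReal_le_ofReal ?_
  simp only [norm_div, Real.norm_eq_abs, abs_of_pos hd, integral_div]
  gcongr
  exact integral_abs_exp_neg_mul_sq_add_sub_le hb hs

theorem lintegral_enorm_integral_le_lintegral_lintegral_enorm {α β E : Type*}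
    [MeasurableSpace α] [MeasurableSpace β] [NormedAddCommGroup E] [NormedSpace ℝ E]
    {μ : Measure α} {ν : Measure β} [SFinite μ] [SFinite ν] {f : α → β → E}
    (hf : AEMeasurable (Function.uncurry fun x y => ‖f x y‖ₑ) (μ.prod ν)) :
    ∫⁻ x, ‖∫ y, f x y ∂ν‖ₑ ∂μ ≤ ∫⁻ y, ∫⁻ x, ‖f x y‖ₑ ∂μ ∂ν :=
  (lintegral_mono fun _ => enorm_integral_le_lintegral_enorm _).trans_eq
    (lintegral_lintegral_swap hf)

/-- The coherent-term profile `b₁(t) = (1/8)√π ∫_0^∞ (e^{−σ²(t+s)²} − e^{−σ²(t−s)²})/sinh(2πs) ds`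
satisfies `‖b₁‖_{L¹} ≤ (1/2)√π ∫_0^∞ s/sinh(2πs) ds ≤ (1/32)√π`, uniformly in `σ > 0`. -/
theorem b1_L1_bound (σ : ℝ) (hσ : 0 < σ) :
    (∫⁻ t : ℝ, ENNReal.ofReal
        |(1/8) * Real.sqrt π * ∫ s in Set.Ioi (0:ℝ),
            (Real.exp (-σ^2 * (t + s)^2) - Real.exp (-σ^2 * (t - s)^2)) / Real.sinh (2*π*s)|
      ≤ ENNReal.ofReal
          ((1/2) * Real.sqrt π * ∫ s in Set.Ioi (0:ℝ), s / Real.sinh (2*π*s)))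
    ∧ (∫⁻ t : ℝ, ENNReal.ofReal
        |(1/8) * Real.sqrt π * ∫ s in Set.Ioi (0:ℝ),
            (Real.exp (-σ^2 * (t + s)^2) - Real.exp (-σ^2 * (t - s)^2)) / Real.sinh (2*π*s)|
      ≤ ENNReal.ofReal ((1/32) * Real.sqrt π)) := by
  set F : ℝ → ℝ → ℝ := fun t s =>
    (exp (-σ ^ 2 * (t + s) ^ 2) - exp (-σ ^ 2 * (t - s) ^ 2)) / sinh (2 * π * s)
  have hvalue : ∫ s in Ioi (0 : ℝ), s / sinh (2 * π * s) = 1 / 16 := by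
    rw [integral_div_sinh_mul_Ioi (by positivity)]
    field_simp
    ring
  have hbound : ∫⁻ t, ENNReal.ofReal |1 / 8 * √π * ∫ s in Ioi 0, F t s| ≤
      ENNReal.ofReal (1 / 32 * √π) := calc
    _ = ENNReal.ofReal (1 / 8 * √π) * ∫⁻ t, ‖∫ s in Ioi 0, F t s‖ₑ := by
      have hc : (0 : ℝ) ≤ 1 / 8 * √π := by positivity
      simp only [abs_mul _ (integral _ _), abs_of_nonneg hc, ENNReal.ofReal_mul hc,
        ← enorm_eq_ofReal_abs]
      exact lintegral_const_mul' _ _ ENNReal.ofReal_ne_top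
    _ ≤ ENNReal.ofReal (1 / 8 * √π) * ∫⁻ s in Ioi 0, ∫⁻ t, ‖F t s‖ₑ := by
      gcongr _ * ?_
      exact lintegral_enorm_integral_le_lintegral_lintegral_enorm
        (Measurable.aemeasurable (by fun_prop))
    _ ≤ ENNReal.ofReal (1 / 8 * √π) *
        ∫⁻ s in Ioi 0, ENNReal.ofReal (4 * s / sinh (2 * π * s)) := by
      gcongr _ * ?_
      refine setLIntegral_mono' measurableSet_Ioi fun s (hs : 0 < s) => ?_
      exact lintegral_enorm_exp_neg_mul_sq_add_sub_div_le (by positivity) hs.le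
        (sinh_pos_iff.mpr (by positivity))
    _ = ENNReal.ofReal (1 / 32 * √π) := by
      simp_rw [mul_div_assoc, ENNReal.ofReal_mul zero_le_four]
      rw [lintegral_const_mul _ (by fun_prop), lintegral_ofReal_div_sinh_mul_Ioi (by positivity),
        ← ENNReal.ofReal_mul zero_le_four, ← ENNReal.ofReal_mul (by positivity)]
      congr 1
      field_simp
      ring
  rw [hvalue]
  exact ⟨hbound.trans_eq (by ring_nf), hbound⟩
end

section
/- Let σ > 0 and G_σ(x) = σ^{−1}√π e^{−x²/σ²}. Let γ : ℝ → ℝ be continuous with e^{|ω|/2}γ(ω) integrable. Then the convolution identity (γ * G_σ)(τ) = e^{−τ}(γ * G_σ)(−τ) holds for all τ ∈ ℝ if and only if γ has the form γ(ω) = e^{−ω/2} φ(ω + σ²/4) for some even continuous function φ : ℝ → ℝ. -/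
/-!
Writing `γ ω = e^{-ω/2} φ(ω + σ²/4)` (which defines `φ` from `γ`), completing the square turns
`(γ * G_σ)(τ)` into `e^{σ²/16 - τ/2} (φ * G_σ)(τ)`. The balance identity thus says exactly that
`φ * G_σ = φ(-·) * G_σ`, and Gaussian convolution is injective on continuous integrable functions
because the Fourier transform of a Gaussian vanishes nowhere.
-/

open MeasureTheory Real FourierTransform ContinuousLinearMap Convolution

theorem eq_zero_of_convolution_eq_zero {V : Type*} [NormedAddCommGroup V]
    [InnerProductSpace ℝ V] [FiniteDimensional ℝ V] [MeasurableSpace V] [BorelSpace V]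
    {ψ g : V → ℂ} (hψc : Continuous ψ) (hψi : Integrable ψ) (hg : Integrable g)
    (hg0 : ∀ ξ, 𝓕 g ξ ≠ 0) (h : ψ ⋆[mul ℂ ℂ] g = 0) : ψ = 0 := by
  have hF : 𝓕 ψ = 0 := funext fun ξ => by
    have hmul := fourier_mul_convolution_eq hψi hg ξ
    rw [h, Real.fourier_eq] at hmul
    simpa [hg0 ξ] using hmul.symm
  rw [← hψc.fourierInv_fourier_eq hψi (by rw [hF]; exact integrable_zero _ _ _), hF]
  ext v
  simp [Real.fourierInv_eq]

theorem fourier_gaussian_ne_zero {b : ℂ} (hb : 0 < b.re) (ξ : ℝ) :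
    𝓕 (fun x : ℝ => Complex.exp (-b * x ^ 2)) ξ ≠ 0 := by
  have hbπ : 0 < (b / π).re := by rw [Complex.div_ofReal_re]; positivity
  have hπ : (π : ℂ) ≠ 0 := Complex.ofReal_ne_zero.2 pi_ne_zero
  have hgauss : (fun x : ℝ => Complex.exp (-b * x ^ 2)) =
      fun x : ℝ => Complex.exp (-π * (b / π) * x ^ 2) := by
    simp only [neg_mul, mul_div_cancel₀ b hπ]
  rw [hgauss, fourier_gaussian_pi hbπ]
  have hb0 : b / π ≠ 0 := fun h => by simp [h] at hbπ
  simp [hb0, Complex.exp_ne_zero]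

lemma integrable_mul_gaussian {φ : ℝ → ℝ} (hφi : Integrable φ) (σ t : ℝ) :
    Integrable fun v => φ v * exp (-(t - v) ^ 2 / σ ^ 2) := by
  refine hφi.mul_bdd (c := 1) (Continuous.aestronglyMeasurable (by fun_prop))
    (ae_of_all _ fun v => ?_)
  rw [norm_of_nonneg (exp_pos _).le, exp_le_one_iff, neg_div]
  exact neg_nonpos.2 (by positivity)

theorem eq_of_integral_mul_gaussian_eq {σ : ℝ} (hσ : σ ≠ 0) {φ ψ : ℝ → ℝ}
    (hφc : Continuous φ) (hφi : Integrable φ) (hψc : Continuous ψ) (hψi : Integrable ψ)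
    (h : ∀ t, ∫ v, φ v * exp (-(t - v) ^ 2 / σ ^ 2) = ∫ v, ψ v * exp (-(t - v) ^ 2 / σ ^ 2)) :
    φ = ψ := by
  set g : ℝ → ℂ := fun x => Complex.exp (-((σ ^ 2)⁻¹ : ℝ) * x ^ 2)
  have hg_real (x : ℝ) : g x = (exp (-x ^ 2 / σ ^ 2) : ℂ) := by
    simp only [g, Complex.ofReal_exp]
    push_cast
    ring_nf
  have hb : 0 < (((σ ^ 2)⁻¹ : ℝ) : ℂ).re := by rw [Complex.ofReal_re]; positivity
  have hdiff := eq_zero_of_convolution_eq_zero (ψ := fun x => ((φ x - ψ x : ℝ) : ℂ)) (g := g)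
    (by fun_prop) (hφi.sub hψi).ofReal (integrable_cexp_neg_mul_sq hb)
    (fourier_gaussian_ne_zero hb) ?_
  · ext x
    simpa [sub_eq_zero] using congrFun hdiff x
  ext t
  simp only [convolution_mul, hg_real, ← Complex.ofReal_mul, sub_mul]
  rw [integral_complex_ofReal, integral_sub (integrable_mul_gaussian hφi σ t)
    (integrable_mul_gaussian hψi σ t), h t]
  simp

lemma integral_exp_mul_shift_mul_gaussian {σ : ℝ} (hσ : σ ≠ 0) (φ : ℝ → ℝ) (t : ℝ) :
    ∫ ω, exp (-ω / 2) * φ (ω + σ ^ 2 / 4) * exp (-(t - ω) ^ 2 / σ ^ 2) =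
      exp (σ ^ 2 / 16 - t / 2) * ∫ v, φ v * exp (-(t - v) ^ 2 / σ ^ 2) := by
  rw [← integral_sub_right_eq_self _ (σ ^ 2 / 4), ← integral_const_mul]
  congr 1 with v
  have hexp : -(v - σ ^ 2 / 4) / 2 + -(t - (v - σ ^ 2 / 4)) ^ 2 / σ ^ 2 =
      σ ^ 2 / 16 - t / 2 + -(t - v) ^ 2 / σ ^ 2 := by
    field_simp
    ring
  rw [sub_add_cancel, mul_right_comm, ← exp_add, hexp, exp_add]
  ring

theorem integral_gaussian_balance_iff {σ c : ℝ} (hσ : σ ≠ 0) (hc : c ≠ 0) {γ φ : ℝ → ℝ}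
    (hγ : ∀ ω, γ ω = exp (-ω / 2) * φ (ω + σ ^ 2 / 4)) :
    (∀ τ, ∫ ω, γ ω * (c * exp (-(τ - ω) ^ 2 / σ ^ 2)) =
        exp (-τ) * ∫ ω, γ ω * (c * exp (-(-τ - ω) ^ 2 / σ ^ 2))) ↔
      ∀ t, ∫ v, φ v * exp (-(t - v) ^ 2 / σ ^ 2) = ∫ v, φ (-v) * exp (-(t - v) ^ 2 / σ ^ 2) := by
  have hconv (t : ℝ) : ∫ ω, γ ω * (c * exp (-(t - ω) ^ 2 / σ ^ 2)) =
      c * exp (σ ^ 2 / 16 - t / 2) * ∫ v, φ v * exp (-(t - v) ^ 2 / σ ^ 2) := by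
    simp_rw [hγ, mul_left_comm _ c, integral_const_mul]
    rw [integral_exp_mul_shift_mul_gaussian hσ, mul_assoc]
  have hreflect (t : ℝ) : ∫ v, φ v * exp (-(-t - v) ^ 2 / σ ^ 2) =
      ∫ v, φ (-v) * exp (-(t - v) ^ 2 / σ ^ 2) := by
    rw [← integral_neg_eq_self]
    congr 1 with v
    ring_nf
  refine forall_congr' fun t => ?_
  have hfactor : exp (-t) * (c * exp (σ ^ 2 / 16 - -t / 2)) = c * exp (σ ^ 2 / 16 - t / 2) := by
    rw [mul_left_comm, ← exp_add]
    ring_nf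
  rw [hconv, hconv, hreflect, ← mul_assoc, hfactor, mul_right_inj' (by positivity)]

lemma integrable_exp_half_mul_of_exp_abs_half_mul {γ : ℝ → ℝ}
    (h : Integrable fun ω => exp (|ω| / 2) * γ ω) : Integrable fun ω => exp (ω / 2) * γ ω := by
  have hbound (ω : ℝ) : ‖exp ((ω - |ω|) / 2)‖ ≤ 1 := by
    rw [norm_of_nonneg (exp_pos _).le, exp_le_one_iff]
    linarith [le_abs_self ω]
  refine (h.bdd_mul (Continuous.aestronglyMeasurable (by fun_prop)) (ae_of_all _ hbound)).congr
    (ae_of_all _ fun ω => ?_)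
  simp only [← mul_assoc, ← exp_add]
  ring_nf

/-- For `σ > 0`, `G_σ(x) = σ^{−1}√π e^{−x²/σ²}`, and `γ` continuous with `e^{|ω|/2}γ(ω)`
integrable, the identity `(γ * G_σ)(τ) = e^{−τ}(γ * G_σ)(−τ)` holds for all `τ` iff
`γ(ω) = e^{−ω/2} φ(ω + σ²/4)` for some even continuous `φ`. -/
theorem convolution_balance_iff (σ : ℝ) (hσ : 0 < σ) (γ : ℝ → ℝ)
    (hcont : Continuous γ)
    (hint : Integrable (fun ω : ℝ => Real.exp (|ω| / 2) * γ ω)) :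
    (∀ τ : ℝ,
        (∫ ω : ℝ, γ ω * (σ⁻¹ * Real.sqrt Real.pi * Real.exp (-(τ - ω)^2 / σ^2)))
          = Real.exp (-τ) *
            ∫ ω : ℝ, γ ω * (σ⁻¹ * Real.sqrt Real.pi * Real.exp (-(-τ - ω)^2 / σ^2)))
      ↔ ∃ φ : ℝ → ℝ, Continuous φ ∧ (∀ x : ℝ, φ (-x) = φ x) ∧
          ∀ ω : ℝ, γ ω = Real.exp (-ω / 2) * φ (ω + σ^2 / 4) := by
  have hc : σ⁻¹ * √π ≠ 0 := by positivity
  set φ : ℝ → ℝ := fun x => exp ((x - σ ^ 2 / 4) / 2) * γ (x - σ ^ 2 / 4)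
  have hγ (ω : ℝ) : γ ω = exp (-ω / 2) * φ (ω + σ ^ 2 / 4) := by
    simp only [φ, add_sub_cancel_right, ← mul_assoc, ← exp_add]
    rw [neg_div, neg_add_cancel, exp_zero, one_mul]
  have hφc : Continuous φ := by fun_prop
  have hφi : Integrable φ :=
    (integrable_exp_half_mul_of_exp_abs_half_mul hint).comp_sub_right (σ ^ 2 / 4)
  constructor
  · intro h
    have hsymm := (integral_gaussian_balance_iff hσ.ne' hc hγ).1 h
    have heven := eq_of_integral_mul_gaussian_eq hσ.ne' hφc hφi (hφc.comp continuous_neg)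
      hφi.comp_neg hsymm
    exact ⟨φ, hφc, fun x => (congrFun heven x).symm, hγ⟩
  · rintro ⟨ψ, -, hψ, hγψ⟩
    exact (integral_gaussian_balance_iff hσ.ne' hc hγψ).2 fun t => by simp only [hψ]
end

section
/- Let σ > 0 and let A(ζ) = ∫_ℝ γ(ω) e^{−ω²/σ²} e^{−ζω/σ²} dω where γ(ω) = e^{−ω/2} φ(ω + σ²/4) for an even continuous φ with sufficient decay. Then A(−ζ) = e^{−ζ/2} A(ζ) for all ζ ∈ ℝ. -/
/-!
Substituting `t = ω + σ²/4` completes the square: the factor `e^{−ω/2}` is absorbed into the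
Gaussian, and `A(ζ) = e^{σ²/16 + ζ/4} L(ζ)` with `L(ζ) = ∫ φ(t) e^{−t²/σ²} e^{−ζt/σ²} dt`.
Since `φ` is even, the reflection `t ↦ −t` shows `L(−ζ) = L(ζ)`, and the two prefactors differ
by `e^{−ζ/2}`.
-/

open MeasureTheory Real

noncomputable section

def gaussianLaplace (s : ℝ) (φ : ℝ → ℝ) (ζ : ℝ) : ℝ :=
  ∫ t, φ t * exp (-t ^ 2 / s) * exp (-ζ * t / s)

theorem gaussianLaplace_neg (s : ℝ) {φ : ℝ → ℝ} (hφ : ∀ x, φ (-x) = φ x) (ζ : ℝ) :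
    gaussianLaplace s φ (-ζ) = gaussianLaplace s φ ζ := by
  rw [gaussianLaplace, gaussianLaplace,
    ← integral_neg_eq_self (fun t ↦ φ t * exp (-t ^ 2 / s) * exp (-ζ * t / s))]
  congr 1 with t
  rw [hφ, neg_sq, neg_mul_neg, neg_neg]

theorem exp_neg_half_mul_gaussian_tilt {s : ℝ} (hs : s ≠ 0) (ζ ω : ℝ) :
    exp (-ω / 2) * exp (-ω ^ 2 / s) * exp (-ζ * ω / s) =
      exp (s / 16 + ζ / 4) * (exp (-(ω + s / 4) ^ 2 / s) * exp (-ζ * (ω + s / 4) / s)) := by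
  simp only [← exp_add]
  congr 1
  field_simp
  ring

theorem integral_shifted_eq_exp_mul_gaussianLaplace {s : ℝ} (hs : s ≠ 0) (φ : ℝ → ℝ) (ζ : ℝ) :
    ∫ ω, exp (-ω / 2) * φ (ω + s / 4) * exp (-ω ^ 2 / s) * exp (-ζ * ω / s) =
      exp (s / 16 + ζ / 4) * gaussianLaplace s φ ζ := by
  have hpointwise (ω : ℝ) :
      exp (-ω / 2) * φ (ω + s / 4) * exp (-ω ^ 2 / s) * exp (-ζ * ω / s) =
        exp (s / 16 + ζ / 4) * (φ (ω + s / 4) * exp (-(ω + s / 4) ^ 2 / s) *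
          exp (-ζ * (ω + s / 4) / s)) := by
    linear_combination φ (ω + s / 4) * exp_neg_half_mul_gaussian_tilt hs ζ ω
  simp_rw [hpointwise, integral_const_mul, gaussianLaplace]
  rw [integral_add_right_eq_self (fun t ↦ φ t * exp (-t ^ 2 / s) * exp (-ζ * t / s))]

end

theorem gaussian_moment_balance_general (σ : ℝ) (hσ : 0 < σ) (φ γ : ℝ → ℝ)
    (hφeven : ∀ x : ℝ, φ (-x) = φ x)
    (hγ : ∀ ω : ℝ, γ ω = Real.exp (-ω / 2) * φ (ω + σ^2 / 4)) :
    ∀ ζ : ℝ,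
      (∫ ω : ℝ, γ ω * Real.exp (-ω^2 / σ^2) * Real.exp (-(-ζ) * ω / σ^2))
        = Real.exp (-ζ / 2) *
          ∫ ω : ℝ, γ ω * Real.exp (-ω^2 / σ^2) * Real.exp (-ζ * ω / σ^2) := by
  intro ζ
  have hs : σ ^ 2 ≠ 0 := pow_ne_zero 2 hσ.ne'
  simp only [hγ, integral_shifted_eq_exp_mul_gaussianLaplace hs, gaussianLaplace_neg _ hφeven]
  rw [← mul_assoc, ← exp_add]
  ring_nf

/-- For `σ > 0`, `γ(ω) = e^{−ω/2} φ(ω + σ²/4)` with `φ` even and continuous (with enough decay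
for the integrals to converge), the function `A(ζ) = ∫ γ(ω) e^{−ω²/σ²} e^{−ζω/σ²} dω`
satisfies `A(−ζ) = e^{−ζ/2} A(ζ)` for all `ζ`. -/
theorem gaussian_moment_balance (σ : ℝ) (hσ : 0 < σ) (φ γ : ℝ → ℝ)
    (hφcont : Continuous φ) (hφeven : ∀ x : ℝ, φ (-x) = φ x)
    (hγ : ∀ ω : ℝ, γ ω = Real.exp (-ω / 2) * φ (ω + σ^2 / 4))
    (hint : ∀ ζ : ℝ, Integrable (fun ω : ℝ =>
      γ ω * Real.exp (-ω^2 / σ^2) * Real.exp (-ζ * ω / σ^2))) :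
    ∀ ζ : ℝ,
      (∫ ω : ℝ, γ ω * Real.exp (-ω^2 / σ^2) * Real.exp (-(-ζ) * ω / σ^2))
        = Real.exp (-ζ / 2) *
          ∫ ω : ℝ, γ ω * Real.exp (-ω^2 / σ^2) * Real.exp (-ζ * ω / σ^2) :=
  gaussian_moment_balance_general σ hσ φ γ hφeven hγ
end

section
/- Suppose P is a self-adjoint operator on a Hilbert space H with P ≥ 1, and A is a bounded operator. Then ‖P^{1/2} A* P^{−1}‖ ≤ ‖A P^{−1/2}‖ + ‖[P,A] P^{−1/2}‖, where all operators are assumed bounded on H; equivalently ‖A‖_{𝒟^{−1/2} → 𝒟^{−1}} ≤ ‖AP^{−1/2}‖ + ‖[P,A]P^{−1/2}‖ with 𝒟^s = D(P^s). -/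
/-! Taking adjoints, `‖P^{1/2} A* P⁻¹‖ = ‖(P⁻¹)* A P^{1/2}‖`. Since `A P^{1/2} = A P P^{-1/2}`
and `(P⁻¹)*` is a left inverse of `P* = P`, one gets
`(P⁻¹)* A P^{1/2} = A P^{-1/2} - (P⁻¹)* [P, A] P^{-1/2}`, and `‖(P⁻¹)*‖ = ‖P⁻¹‖ ≤ 1`. -/

theorem mul_mul_eq_sub_mul_commutator_mul {R : Type*} [Ring R] {L P Q Qinv : R} (A : R)
    (hL : L * P = 1) (hPQ : P * Qinv = Q) :
    L * A * Q = A * Qinv - L * ((P * A - A * P) * Qinv) := by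
  have hAQ : L * (A * P * Qinv) = L * A * Q := by rw [mul_assoc A, hPQ, mul_assoc]
  have hLPA : L * (P * A * Qinv) = A * Qinv := by rw [← mul_assoc, ← mul_assoc, hL, one_mul]
  rw [sub_mul, mul_sub, hAQ, hLPA, sub_sub_cancel]

theorem norm_mul_mul_le_of_mul_eq_one {R : Type*} [NormedRing R] {L P Q Qinv : R} (A : R)
    (hL : L * P = 1) (hPQ : P * Qinv = Q) :
    ‖L * A * Q‖ ≤ ‖A * Qinv‖ + ‖L‖ * ‖(P * A - A * P) * Qinv‖ := by
  rw [mul_mul_eq_sub_mul_commutator_mul A hL hPQ]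
  exact (norm_sub_le _ _).trans (add_le_add_right (norm_mul_le _ _) _)

theorem IsSelfAdjoint.star_mul_eq_one {R : Type*} [Monoid R] [StarMul R] {P Pinv : R}
    (hP : IsSelfAdjoint P) (hPinv : P * Pinv = 1) : star Pinv * P = 1 := by
  rw [← hP.star_eq, ← star_mul, hPinv, star_one]

theorem norm_mul_star_mul_le {R : Type*} [NormedRing R] [StarRing R] [NormedStarGroup R]
    {P Q Pinv Qinv : R} (A : R) (hP : IsSelfAdjoint P) (hQ : IsSelfAdjoint Q)
    (hQsq : Q * Q = P) (hPinv : P * Pinv = 1) (hQinv : Q * Qinv = 1) :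
    ‖Q * star A * Pinv‖ ≤ ‖A * Qinv‖ + ‖Pinv‖ * ‖(P * A - A * P) * Qinv‖ := by
  have hPQ : P * Qinv = Q := by rw [← hQsq, mul_assoc, hQinv, mul_one]
  have hstar : star (Q * star A * Pinv) = star Pinv * A * Q := by
    rw [star_mul, star_mul, star_star, hQ.star_eq, mul_assoc]
  rw [← norm_star, hstar, ← norm_star Pinv]
  exact norm_mul_mul_le_of_mul_eq_one A (hP.star_mul_eq_one hPinv) hPQ

theorem sqrt_adjoint_inverse_bound_general {H : Type*} [NormedAddCommGroup H]
    [InnerProductSpace ℂ H] [CompleteSpace H]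
    (P Q Pinv Qinv A : H →L[ℂ] H)
    (hPsa : IsSelfAdjoint P)
    (hQpos : Q.IsPositive) (hQsq : Q * Q = P)
    (hPinv : P * Pinv = 1) (hPinvnorm : ‖Pinv‖ ≤ 1)
    (hQinv : Q * Qinv = 1) :
    ‖Q * ContinuousLinearMap.adjoint A * Pinv‖
      ≤ ‖A * Qinv‖ + ‖(P * A - A * P) * Qinv‖ := by
  rw [← ContinuousLinearMap.star_eq_adjoint]
  calc ‖Q * star A * Pinv‖
      ≤ ‖A * Qinv‖ + ‖Pinv‖ * ‖(P * A - A * P) * Qinv‖ :=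
        norm_mul_star_mul_le A hPsa hQpos.isSelfAdjoint hQsq hPinv hQinv
    _ ≤ ‖A * Qinv‖ + ‖(P * A - A * P) * Qinv‖ := by
        gcongr
        exact mul_le_of_le_one_left (norm_nonneg _) hPinvnorm

/-- For `P` self-adjoint with `P ≥ 1` on a Hilbert space (so the inverse `P⁻¹` with
`‖P⁻¹‖ ≤ 1` and the square root `Q = P^{1/2}` with inverse `Q⁻¹ = P^{−1/2}` exist), and `A`
bounded, one has `‖P^{1/2} A* P^{−1}‖ ≤ ‖A P^{−1/2}‖ + ‖[P,A] P^{−1/2}‖`. -/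
theorem sqrt_adjoint_inverse_bound {H : Type*} [NormedAddCommGroup H]
    [InnerProductSpace ℂ H] [CompleteSpace H]
    (P Q Pinv Qinv A : H →L[ℂ] H)
    (hPsa : IsSelfAdjoint P) (hPge : (P - 1).IsPositive)
    (hQpos : Q.IsPositive) (hQsq : Q * Q = P)
    (hPinv : P * Pinv = 1) (hPinv' : Pinv * P = 1) (hPinvnorm : ‖Pinv‖ ≤ 1)
    (hQinv : Q * Qinv = 1) (hQinv' : Qinv * Q = 1) :
    ‖Q * ContinuousLinearMap.adjoint A * Pinv‖
      ≤ ‖A * Qinv‖ + ‖(P * A - A * P) * Qinv‖ :=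
  sqrt_adjoint_inverse_bound_general P Q Pinv Qinv A hPsa hQpos hQsq hPinv hPinvnorm hQinv
end

section
/- Let P be self-adjoint with P ≥ 1 on a Hilbert space H, and let g ∈ 𝒮(ℝ) be such that its Fourier transform ĝ extends holomorphically to the strip {t − iμ : t ∈ ℝ, μ ∈ (−ε, 1+ε)} with |ĝ(t − iμ)| ≤ C⟨t⟩^{−2} for μ ∈ [0,1]. Let A be bounded on H. Then e^{−P} ∫_ℝ e^{itP} A e^{−itP} ĝ(t) dt = ( ∫_ℝ e^{itP} A e^{−itP} ĝ(t − i) dt ) e^{−P}, where both integrals converge in operator norm; equivalently e^{−P} Â(g) = Â(e^{−•}g(•)) e^{−P} with Â(g) = ∫ Â(ω)g(ω)dω the operator Fourier transform paired with g. -/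
/-!
For self-adjoint `P` the operator function `F z = e^{izP} A e^{-izP}` is entire, bounded by `‖A‖`
on the real line and by `e^{2|Im z|‖P‖} ‖A‖` elsewhere, and satisfies
`F (z + i) e^{-P} = e^{-P} F z`. Hence `z ↦ G (z - i) • F z e^{-P}` is holomorphic on the strip
`0 ≤ Im z ≤ 1` and decays like `⟨Re z⟩^{-2}` there, so Cauchy's theorem on rectangles equates its
integrals along the two edges of the strip: the bottom edge gives the right-hand side, the top edge
the left-hand side.
-/

open MeasureTheory Complex Filter Topology Set

namespace NormedSpace

theorem norm_exp_le_exp_norm {𝕂 𝔸 : Type*} [RCLike 𝕂] [NormedRing 𝔸] [NormOneClass 𝔸]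
    [NormedAlgebra 𝕂 𝔸] [CompleteSpace 𝔸] (x : 𝔸) : ‖exp x‖ ≤ Real.exp ‖x‖ := by
  have hterm (n : ℕ) : ‖(n.factorial⁻¹ : 𝕂) • x ^ n‖ ≤ ‖x‖ ^ n / n.factorial := by
    rw [norm_smul, norm_inv, RCLike.norm_natCast, inv_mul_eq_div]
    gcongr
    exact norm_pow_le x n
  rw [exp_eq_tsum 𝕂, Real.exp_eq_exp_ℝ, exp_eq_tsum_div]
  exact (norm_tsum_le_tsum_norm (norm_expSeries_summable' x)).trans
    ((norm_expSeries_summable' x).tsum_le_tsum hterm (Real.summable_pow_div_factorial _))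

variable {𝔸 : Type*} [NormedRing 𝔸] [NormedAlgebra ℂ 𝔸] [CompleteSpace 𝔸]

theorem exp_add_smul (a b : ℂ) (x : 𝔸) : exp ((a + b) • x) = exp (a • x) * exp (b • x) := by
  let +nondep : NormedAlgebra ℚ 𝔸 := .restrictScalars ℚ ℂ 𝔸
  rw [add_smul, exp_add_of_commute (((Commute.refl x).smul_left a).smul_right b)]

theorem differentiable_exp_smul (x : 𝔸) : Differentiable ℂ fun c : ℂ => exp (c • x) :=
  fun c => (hasDerivAt_exp_smul_const x c).differentiableAt

end NormedSpace

theorem CStarRing.norm_le_one_of_mem_unitary {E : Type*} [NormedRing E] [StarRing E] [CStarRing E]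
    {U : E} (hU : U ∈ unitary E) : ‖U‖ ≤ 1 := by
  rcases subsingleton_or_nontrivial E with _ | _
  · simp [Subsingleton.elim U 0]
  · exact (norm_of_mem_unitary hU).le

theorem IsSelfAdjoint.norm_exp_smul_le {𝔸 : Type*} [CStarAlgebra 𝔸] {a : 𝔸}
    (ha : IsSelfAdjoint a) (c : ℂ) :
    ‖NormedSpace.exp (c • a)‖ ≤ Real.exp (|c.re| * ‖a‖) := by
  nontriviality 𝔸
  let +nondep : NormedAlgebra ℚ 𝔸 := .restrictScalars ℚ ℂ 𝔸
  have hunitary : NormedSpace.exp ((c.im * I) • a) ∈ unitary 𝔸 := by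
    rw [mul_comm, mul_smul]
    exact NormedSpace.exp_mem_unitary_of_mem_skewAdjoint
      ((IsSelfAdjoint.smul (conj_ofReal c.im) ha).smul_mem_skewAdjoint conj_I)
  calc ‖NormedSpace.exp (c • a)‖
        = ‖NormedSpace.exp ((c.re : ℂ) • a) * NormedSpace.exp ((c.im * I) • a)‖ := by
        rw [← NormedSpace.exp_add_smul, re_add_im]
    _ ≤ ‖NormedSpace.exp ((c.re : ℂ) • a)‖ * 1 :=
        (norm_mul_le _ _).trans (by gcongr; exact CStarRing.norm_le_one_of_mem_unitary hunitary)
    _ ≤ Real.exp (|c.re| * ‖a‖) := by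
        rw [mul_one, ← Real.norm_eq_abs, ← norm_real, ← norm_smul]
        exact NormedSpace.norm_exp_le_exp_norm (𝕂 := ℂ) _

section StripShift

variable {E : Type*} [NormedAddCommGroup E]

theorem integrable_of_norm_le_div_one_add_sq {f : ℝ → E} (hf : Continuous f) {B : ℝ}
    (hb : ∀ t, ‖f t‖ ≤ B / (1 + t ^ 2)) : Integrable f :=
  (integrable_inv_one_add_sq.const_mul B).mono' hf.aestronglyMeasurable
    (Eventually.of_forall fun t => by simpa only [div_eq_mul_inv] using hb t)

variable [NormedSpace ℂ E]

theorem norm_smul_le_mul_div_one_add_sq {c : ℂ} {x : E} {t C M : ℝ}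
    (hc : ‖c‖ ≤ C / (1 + t ^ 2)) (hx : ‖x‖ ≤ M) : ‖c • x‖ ≤ C * M / (1 + t ^ 2) := by
  rw [norm_smul, mul_div_right_comm]
  exact mul_le_mul hc hx (norm_nonneg _) ((norm_nonneg _).trans hc)

variable {f : ℂ → E} {y B : ℝ}

theorem integral_sub_integral_add_mul_I_eq_vertical (hf : DifferentiableOn ℂ f (im ⁻¹' Icc 0 y))
    (hy : 0 ≤ y) (R : ℝ) :
    (∫ x in -R..R, f x) - ∫ x in -R..R, f (x + y * I) =
      I • (∫ τ in 0..y, f (-R + τ * I)) - I • ∫ τ in 0..y, f (R + τ * I) := by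
  have hrect := integral_boundary_rect_eq_zero_of_differentiableOn f (-R) (R + y * I)
    (hf.mono fun z hz => by simpa [uIcc_of_le hy] using (mem_reProdIm.mp hz).2)
  simp only [neg_re, ofReal_re, neg_im, ofReal_im, neg_zero, ofReal_zero, zero_mul, add_zero,
    add_re, mul_re, I_re, mul_zero, I_im, mul_one, sub_zero, add_im, mul_im, zero_add,
    ofReal_neg] at hrect
  rw [← sub_eq_zero, ← hrect]
  abel

theorem norm_integral_vertical_le (hy : 0 ≤ y)
    (hb : ∀ t μ : ℝ, μ ∈ Icc 0 y → ‖f (t + μ * I)‖ ≤ B / (1 + t ^ 2)) (s : ℝ) :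
    ‖∫ τ in 0..y, f (s + τ * I)‖ ≤ B / (1 + s ^ 2) * y := by
  simpa [abs_of_nonneg hy] using intervalIntegral.norm_integral_le_of_norm_le_const
    fun τ hτ => hb s τ (Ioc_subset_Icc_self ((uIoc_of_le hy) ▸ hτ))

theorem integral_eq_integral_add_mul_I (hf : DifferentiableOn ℂ f (im ⁻¹' Icc 0 y)) (hy : 0 ≤ y)
    (hb : ∀ t μ : ℝ, μ ∈ Icc 0 y → ‖f (t + μ * I)‖ ≤ B / (1 + t ^ 2)) :
    ∫ t : ℝ, f t = ∫ t : ℝ, f (t + y * I) := by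
  have hline (μ : ℝ) (hμ : μ ∈ Icc 0 y) : Integrable fun t : ℝ => f (t + μ * I) :=
    integrable_of_norm_le_div_one_add_sq
      (hf.continuousOn.comp_continuous (by fun_prop) fun t => by simpa using hμ) (hb · μ hμ)
  have hbottom : Integrable fun t : ℝ => f t := by
    simpa using hline 0 ⟨le_rfl, hy⟩
  have hlim := (intervalIntegral_tendsto_integral hbottom tendsto_neg_atTop_atBot tendsto_id).sub
    (intervalIntegral_tendsto_integral (hline y ⟨hy, le_rfl⟩) tendsto_neg_atTop_atBot tendsto_id)
  have hedges : Tendsto (fun R : ℝ => I • (∫ τ in 0..y, f (-R + τ * I)) -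
      I • ∫ τ in 0..y, f (R + τ * I)) atTop (𝓝 0) := by
    have hdecay : Tendsto (fun R : ℝ => 2 * (B / (1 + R ^ 2) * y)) atTop (𝓝 0) := by
      simpa using ((tendsto_const_nhds.div_atTop (tendsto_atTop_add_const_left _ 1
        (tendsto_pow_atTop two_ne_zero))).mul_const y).const_mul 2
    refine squeeze_zero_norm (fun R => ?_) hdecay
    have hleft := norm_integral_vertical_le hy hb (-R)
    rw [ofReal_neg, neg_sq] at hleft
    calc _ ≤ ‖I • ∫ τ in 0..y, f (-R + τ * I)‖ + ‖I • ∫ τ in 0..y, f (R + τ * I)‖ :=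
          norm_sub_le _ _
      _ ≤ B / (1 + R ^ 2) * y + B / (1 + R ^ 2) * y := by
          simp only [norm_smul, norm_I, one_mul]
          exact add_le_add hleft (norm_integral_vertical_le hy hb R)
      _ = 2 * (B / (1 + R ^ 2) * y) := by ring
  simp only [← integral_sub_integral_add_mul_I_eq_vertical hf hy] at hedges
  exact sub_eq_zero.mp (tendsto_nhds_unique hlim hedges)

end StripShift

section ExpConj

variable {𝔸 : Type*}

noncomputable def expConj [NormedRing 𝔸] [NormedAlgebra ℂ 𝔸] (P A : 𝔸) (z : ℂ) : 𝔸 :=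
  NormedSpace.exp ((I * z) • P) * A * NormedSpace.exp ((-(I * z)) • P)

section Banach

variable [NormedRing 𝔸] [NormedAlgebra ℂ 𝔸] [CompleteSpace 𝔸]

theorem differentiable_expConj (P A : 𝔸) : Differentiable ℂ (expConj P A) :=
  (((NormedSpace.differentiable_exp_smul P).comp (differentiable_id.const_mul I)).mul_const A).mul
    ((NormedSpace.differentiable_exp_smul P).comp (differentiable_id.const_mul I).neg)

theorem expConj_add_I_mul_exp_neg (P A : 𝔸) (z : ℂ) :
    expConj P A (z + I) * NormedSpace.exp (-P) = NormedSpace.exp (-P) * expConj P A z := by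
  have hleft : I * (z + I) = -1 + I * z := by linear_combination I_sq
  have hright : -(I * (z + I)) = -(I * z) + 1 := by linear_combination -I_sq
  have hcancel : NormedSpace.exp ((1 : ℂ) • P) * NormedSpace.exp ((-1 : ℂ) • P) = 1 := by
    rw [← NormedSpace.exp_add_smul, add_neg_cancel, zero_smul, NormedSpace.exp_zero]
  rw [← neg_one_smul ℂ P, expConj, expConj, hright, hleft, NormedSpace.exp_add_smul,
    NormedSpace.exp_add_smul]
  simp only [mul_assoc, hcancel, mul_one]

end Banach

section CStar

variable [CStarAlgebra 𝔸] {P : 𝔸}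

theorem IsSelfAdjoint.norm_expConj_le (hP : IsSelfAdjoint P) (A : 𝔸) (z : ℂ) :
    ‖expConj P A z‖ ≤ Real.exp (|z.im| * ‖P‖) * ‖A‖ * Real.exp (|z.im| * ‖P‖) := by
  have hleft := hP.norm_exp_smul_le (I * z)
  have hright := hP.norm_exp_smul_le (-(I * z))
  simp only [neg_re, mul_re, I_re, I_im, zero_mul, one_mul, zero_sub, abs_neg] at hleft hright
  exact norm_mul₃_le.trans (by gcongr)

theorem IsSelfAdjoint.norm_expConj_ofReal_le (hP : IsSelfAdjoint P) (A : 𝔸) (t : ℝ) :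
    ‖expConj P A t‖ ≤ ‖A‖ := by
  simpa using hP.norm_expConj_le A t

theorem IsSelfAdjoint.norm_expConj_mul_exp_neg_le (hP : IsSelfAdjoint P) (A : 𝔸) {z : ℂ}
    (hz : |z.im| ≤ 1) :
    ‖expConj P A z * NormedSpace.exp (-P)‖ ≤
      Real.exp ‖P‖ * ‖A‖ * Real.exp ‖P‖ * Real.exp ‖P‖ := by
  have hexp : ‖NormedSpace.exp (-P)‖ ≤ Real.exp ‖P‖ := by
    simpa using hP.norm_exp_smul_le (-1)
  have hstrip : Real.exp (|z.im| * ‖P‖) ≤ Real.exp ‖P‖ := by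
    gcongr
    exact mul_le_of_le_one_left (norm_nonneg P) hz
  calc _ ≤ ‖expConj P A z‖ * ‖NormedSpace.exp (-P)‖ := norm_mul_le _ _
    _ ≤ Real.exp (|z.im| * ‖P‖) * ‖A‖ * Real.exp (|z.im| * ‖P‖) * Real.exp ‖P‖ := by
        gcongr
        exact hP.norm_expConj_le A z
    _ ≤ _ := by gcongr

variable {A : 𝔸} {g : ℂ → ℂ} {C : ℝ}

theorem IsSelfAdjoint.integrable_smul_expConj (hP : IsSelfAdjoint P)
    (hg : DifferentiableOn ℂ g (im ⁻¹' Icc (-1) 0))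
    (hbound : ∀ t μ : ℝ, μ ∈ Icc (0 : ℝ) 1 → ‖g (t - μ * I)‖ ≤ C / (1 + t ^ 2))
    {μ : ℝ} (hμ : μ ∈ Icc (0 : ℝ) 1) :
    Integrable fun t : ℝ => g (t - μ * I) • expConj P A t :=
  integrable_of_norm_le_div_one_add_sq
    ((hg.continuousOn.comp_continuous (by fun_prop) fun t => by simpa using hμ.symm).smul
      ((differentiable_expConj P A).continuous.comp continuous_ofReal))
    fun t => norm_smul_le_mul_div_one_add_sq (hbound t μ hμ) (hP.norm_expConj_ofReal_le A t)

theorem IsSelfAdjoint.integral_smul_expConj_mul_exp_neg (hP : IsSelfAdjoint P)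
    (hg : DifferentiableOn ℂ g (im ⁻¹' Icc (-1) 0))
    (hbound : ∀ t μ : ℝ, μ ∈ Icc (0 : ℝ) 1 → ‖g (t - μ * I)‖ ≤ C / (1 + t ^ 2)) :
    ∫ t : ℝ, g (t - I) • (expConj P A t * NormedSpace.exp (-P)) =
      ∫ t : ℝ, g t • (NormedSpace.exp (-P) * expConj P A t) := by
  set f : ℂ → 𝔸 := fun z => g (z - I) • (expConj P A z * NormedSpace.exp (-P))
  have hf : DifferentiableOn ℂ f (im ⁻¹' Icc 0 1) :=
    (hg.comp (by fun_prop) fun z hz => by simpa using hz).smul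
      ((differentiable_expConj P A).mul_const _).differentiableOn
  have hfbound (t μ : ℝ) (hμ : μ ∈ Icc (0 : ℝ) 1) :
      ‖f (t + μ * I)‖ ≤ C * (Real.exp ‖P‖ * ‖A‖ * Real.exp ‖P‖ * Real.exp ‖P‖) / (1 + t ^ 2) := by
    have hgμ : ‖g (t + μ * I - I)‖ ≤ C / (1 + t ^ 2) := by
      convert hbound t (1 - μ) ⟨by linarith [hμ.2], by linarith [hμ.1]⟩ using 3
      push_cast
      ring
    refine norm_smul_le_mul_div_one_add_sq hgμ (hP.norm_expConj_mul_exp_neg_le A ?_)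
    simpa [abs_le] using ⟨by linarith [hμ.1], hμ.2⟩
  simpa [f, expConj_add_I_mul_exp_neg] using integral_eq_integral_add_mul_I hf zero_le_one hfbound

end CStar

end ExpConj

theorem exp_conj_operator_fourier_general {H : Type*} [NormedAddCommGroup H]
    [InnerProductSpace ℂ H] [CompleteSpace H]
    (P A : H →L[ℂ] H) (hPsa : IsSelfAdjoint P)
    (G : ℂ → ℂ) (ε C : ℝ) (hε : 0 < ε)
    (hhol : DifferentiableOn ℂ G {z : ℂ | z.im ∈ Set.Ioo (-1 - ε) ε})
    (hbound : ∀ t μ : ℝ, μ ∈ Set.Icc (0:ℝ) 1 →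
      ‖G (t - μ * Complex.I)‖ ≤ C / (1 + t^2)) :
    Integrable (fun t : ℝ => G t •
        (NormedSpace.exp ((Complex.I * t) • P) * A
          * NormedSpace.exp ((-(Complex.I * t)) • P)))
    ∧ Integrable (fun t : ℝ => G (t - Complex.I) •
        (NormedSpace.exp ((Complex.I * t) • P) * A
          * NormedSpace.exp ((-(Complex.I * t)) • P)))
    ∧ NormedSpace.exp (-P) *
        (∫ t : ℝ, G t • (NormedSpace.exp ((Complex.I * t) • P) * A
            * NormedSpace.exp ((-(Complex.I * t)) • P)))
      = (∫ t : ℝ, G (t - Complex.I) • (NormedSpace.exp ((Complex.I * t) • P) * A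
            * NormedSpace.exp ((-(Complex.I * t)) • P))) *
          NormedSpace.exp (-P) := by
  have hG : DifferentiableOn ℂ G (im ⁻¹' Icc (-1) 0) :=
    hhol.mono fun z hz => ⟨by linarith [hz.1], by linarith [hz.2]⟩
  have hint₀ : Integrable fun t : ℝ => G t • expConj P A t := by
    simpa using hPsa.integrable_smul_expConj hG hbound (μ := 0) ⟨le_rfl, zero_le_one⟩
  have hint₁ : Integrable fun t : ℝ => G (t - I) • expConj P A t := by
    simpa using hPsa.integrable_smul_expConj hG hbound (μ := 1) ⟨zero_le_one, le_rfl⟩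
  refine ⟨hint₀, hint₁, ?_⟩
  calc NormedSpace.exp (-P) * ∫ t : ℝ, G t • expConj P A t
      = ∫ t : ℝ, G t • (NormedSpace.exp (-P) * expConj P A t) := by
        simp only [← integral_const_mul_of_integrable hint₀, mul_smul_comm]
    _ = ∫ t : ℝ, G (t - I) • (expConj P A t * NormedSpace.exp (-P)) :=
        (hPsa.integral_smul_expConj_mul_exp_neg hG hbound).symm
    _ = (∫ t : ℝ, G (t - I) • expConj P A t) * NormedSpace.exp (-P) := by
        simp only [← integral_mul_const_of_integrable hint₁, smul_mul_assoc]

/-- Let `P` be self-adjoint with `P ≥ 1` on a Hilbert space, `A` bounded, and let `ĝ = G` be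
holomorphic on the strip `{Im z ∈ (−1−ε, ε)}` with `|G(t − iμ)| ≤ C⟨t⟩^{−2}` for `μ ∈ [0,1]`.
Then (both integrals converging in operator norm)
`e^{−P} ∫ e^{itP} A e^{−itP} G(t) dt = (∫ e^{itP} A e^{−itP} G(t−i) dt) e^{−P}`. -/
theorem exp_conj_operator_fourier {H : Type*} [NormedAddCommGroup H]
    [InnerProductSpace ℂ H] [CompleteSpace H]
    (P A : H →L[ℂ] H) (hPsa : IsSelfAdjoint P) (hPge : (P - 1).IsPositive)
    (G : ℂ → ℂ) (ε C : ℝ) (hε : 0 < ε)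
    (hhol : DifferentiableOn ℂ G {z : ℂ | z.im ∈ Set.Ioo (-1 - ε) ε})
    (hbound : ∀ t μ : ℝ, μ ∈ Set.Icc (0:ℝ) 1 →
      ‖G (t - μ * Complex.I)‖ ≤ C / (1 + t^2)) :
    Integrable (fun t : ℝ => G t •
        (NormedSpace.exp ((Complex.I * t) • P) * A
          * NormedSpace.exp ((-(Complex.I * t)) • P)))
    ∧ Integrable (fun t : ℝ => G (t - Complex.I) •
        (NormedSpace.exp ((Complex.I * t) • P) * A
          * NormedSpace.exp ((-(Complex.I * t)) • P)))
    ∧ NormedSpace.exp (-P) *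
        (∫ t : ℝ, G t • (NormedSpace.exp ((Complex.I * t) • P) * A
            * NormedSpace.exp ((-(Complex.I * t)) • P)))
      = (∫ t : ℝ, G (t - Complex.I) • (NormedSpace.exp ((Complex.I * t) • P) * A
            * NormedSpace.exp ((-(Complex.I * t)) • P))) *
          NormedSpace.exp (-P) :=
  exp_conj_operator_fourier_general P A hPsa G ε C hε hhol hbound
end
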